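/- arXiv:1612.01177 — 4 statements merged into one kernel-verified Lean document; each statement's English description precedes it below -/
import Mathlib

section
/- Let $b > 0$, $\mathbb{S} = \{\zeta \in \mathbb{C} : |\mathrm{Im}\,\zeta| < b\}$, and let $w: \mathbb{S} \to \mathbb{C}$ be bounded analytic with a nonzero limit $c$ as $\mathrm{Re}\,\zeta \to +\infty$ along the real axis (i.e. $w(\theta) \to c \neq 0$ as $\theta \to +\infty$, $\theta \in \mathbb{R}$). Then the weighted restriction operator $R_{w,0}: H^2(\mathbb{S}) \to L^2(\mathbb{R})$, $R_{w,0}f = (w f)|_{\mathbb{R}}$, is not a compact operator. -/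
/-!
The Cauchy kernels `k_a(ζ) = (ζ - (a - K i))⁻¹` with `K = b + π` have their poles below the
strip, and on the line `Im ζ = y` their squared `L²`-norm is `π / (y + K) ≤ 1`, so they lie in
the unit ball of `H²(𝕊)`. On `[a, a + 1]` the kernel `k_a` has modulus at least `1 / (1 + K)`,
while any `k_{a'}` with `a'` far from `a` is at most half of that. Since `|w| ≥ |c| / 2` far out
on the real axis, the images `w k_a` for `a` running through a sparse arithmetic progression
tending to `+∞` are uniformly separated in `L²(ℝ)`, so no finite net covers them.
-/

open Complex MeasureTheory Set

lemma not_totallyBounded_of_pairwise_le_dist {X ι : Type*} [PseudoMetricSpace X] [Infinite ι]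
    {s : Set X} {u : ι → X} (hu : ∀ i, u i ∈ s) {δ : ℝ} (hδ : 0 < δ)
    (hsep : Pairwise fun i j => δ ≤ dist (u i) (u j)) : ¬ TotallyBounded s := by
  intro hs
  obtain ⟨t, ht, hcover⟩ := Metric.totallyBounded_iff.mp hs (δ / 2) (half_pos hδ)
  choose y hyt hy using fun i => mem_iUnion₂.mp (hcover (hu i))
  have := ht.to_subtype
  obtain ⟨i, j, hij, hy_eq⟩ := Finite.exists_ne_map_eq_of_infinite fun i => (⟨y i, hyt i⟩ : t)
  have hyi := Metric.mem_ball.mp (hy i)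
  have hyj := Metric.mem_ball.mp (hy j)
  have hyij : y i = y j := congrArg Subtype.val hy_eq
  rw [hyij] at hyi
  linarith [hsep hij, dist_triangle_right (u i) (u j) (y j)]

lemma le_dist_toLp_of_le_norm_sub {α E : Type*} [MeasurableSpace α] {μ : Measure α}
    [NormedAddCommGroup E] {p : ENNReal} [Fact (1 ≤ p)] (hp : p ≠ ⊤) {f g : α → E}
    (hf : MemLp f p μ) (hg : MemLp g p μ) {s : Set α} (hs : MeasurableSet s) (hμs : 1 ≤ μ s)
    {δ : ℝ} (hδ : 0 ≤ δ) (hfg : ∀ x ∈ s, δ ≤ ‖f x - g x‖) :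
    δ ≤ dist (hf.toLp f) (hg.toLp g) := by
  have hp0 : p ≠ 0 := (zero_lt_one.trans_le Fact.out).ne'
  have hindicator : ENNReal.ofReal δ ≤ eLpNorm (s.indicator fun _ => δ) p μ := by
    rw [eLpNorm_indicator_const hs hp0 hp, Real.enorm_of_nonneg hδ]
    exact le_mul_of_one_le_right (by positivity)
      (ENNReal.one_le_rpow hμs (one_div_pos.mpr (ENNReal.toReal_pos hp0 hp)))
  have hle : eLpNorm (s.indicator fun _ => δ) p μ ≤ eLpNorm (f - g) p μ := by
    refine eLpNorm_mono fun x => ?_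
    by_cases hx : x ∈ s
    · simpa [hx, abs_of_nonneg hδ] using hfg x hx
    · simp [hx]
  rw [dist_eq_norm, ← hf.toLp_sub hg, Lp.norm_toLp]
  exact (ENNReal.ofReal_le_iff_le_toReal (hf.sub hg).eLpNorm_ne_top).mp (hindicator.trans hle)

lemma Complex.inv_abs_re_add_abs_im_le_norm_inv (z : ℂ) : (|z.re| + |z.im|)⁻¹ ≤ ‖z⁻¹‖ := by
  rcases eq_or_ne z 0 with rfl | hz
  · simp
  rw [norm_inv]
  exact inv_anti₀ (norm_pos_iff.mpr hz) (norm_le_abs_re_add_abs_im z)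

lemma Complex.norm_inv_le_inv_abs_re {z : ℂ} (hz : z.re ≠ 0) : ‖z⁻¹‖ ≤ |z.re|⁻¹ := by
  rw [norm_inv]
  exact inv_anti₀ (abs_pos.mpr hz) (abs_re_le_norm z)

lemma lintegral_ofReal_inv_sq_add_sq {c : ℝ} (hc : c ≠ 0) :
    ∫⁻ x : ℝ, ENNReal.ofReal ((x ^ 2 + c ^ 2)⁻¹) = ENNReal.ofReal (Real.pi / |c|) := by
  have hrescale : (fun x : ℝ => (x ^ 2 + c ^ 2)⁻¹) = fun x => (c ^ 2)⁻¹ * (1 + (x / c) ^ 2)⁻¹ := by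
    funext x
    field_simp
    ring
  have hint : Integrable fun x : ℝ => (x ^ 2 + c ^ 2)⁻¹ := by
    rw [hrescale]
    exact (integrable_inv_one_add_sq.comp_div hc).const_mul _
  have hval : ∫ x : ℝ, (x ^ 2 + c ^ 2)⁻¹ = Real.pi / |c| := by
    rw [hrescale, integral_const_mul,
      Measure.integral_comp_div (fun y : ℝ => (1 + y ^ 2)⁻¹), integral_univ_inv_one_add_sq,
      smul_eq_mul, ← sq_abs c]
    field_simp
  rw [← hval, ofReal_integral_eq_lintegral_ofReal hint (ae_of_all _ fun x => by positivity)]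

lemma lintegral_enorm_inv_ofReal_sub_sq {z₀ : ℂ} (hz₀ : z₀.im ≠ 0) :
    ∫⁻ x : ℝ, ‖((x : ℂ) - z₀)⁻¹‖ₑ ^ 2 = ENNReal.ofReal (Real.pi / |z₀.im|) := by
  have hnorm (x : ℝ) : ‖((x : ℂ) - z₀)⁻¹‖ₑ ^ 2 = ENNReal.ofReal (((x - z₀.re) ^ 2 + z₀.im ^ 2)⁻¹) := by
    rw [← ofReal_norm, ← ENNReal.ofReal_pow (norm_nonneg _), norm_inv, inv_pow,
      ← Complex.normSq_eq_norm_sq, Complex.normSq_apply]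
    simp [sq]
  simp_rw [hnorm]
  rw [lintegral_sub_right_eq_self (fun x : ℝ => ENNReal.ofReal ((x ^ 2 + z₀.im ^ 2)⁻¹)) z₀.re,
    lintegral_ofReal_inv_sq_add_sq hz₀]

lemma memLp_two_inv_ofReal_sub {z₀ : ℂ} (hz₀ : z₀.im ≠ 0) :
    MemLp (fun x : ℝ => ((x : ℂ) - z₀)⁻¹) 2 volume := by
  refine ⟨by fun_prop, ?_⟩
  rw [eLpNorm_lt_top_iff_lintegral_rpow_enorm_lt_top two_ne_zero ENNReal.ofNat_ne_top]
  simp only [ENNReal.toReal_ofNat, ENNReal.rpow_ofNat]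
  rw [lintegral_enorm_inv_ofReal_sub_sq hz₀]
  exact ENNReal.ofReal_lt_top

def hardyStripUnitBall (b : ℝ) : Set (ℂ → ℂ) :=
  {f | DifferentiableOn ℂ f {ζ : ℂ | |ζ.im| < b} ∧
    ∀ y : ℝ, |y| < b → ∫⁻ x : ℝ, (‖f ((x : ℂ) + (y : ℂ) * I)‖₊ : ENNReal) ^ 2 ≤ 1}

lemma inv_sub_mem_hardyStripUnitBall {b K : ℝ} (hK : b + Real.pi ≤ K) (a : ℝ) :
    (fun ζ : ℂ => (ζ - (a - K * I))⁻¹) ∈ hardyStripUnitBall b := by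
  constructor
  · refine (differentiableOn_id.sub_const _).inv fun ζ hζ hzero => ?_
    have him : ζ.im + K = 0 := by simpa using congrArg Complex.im hzero
    have : |ζ.im| < b := hζ
    rw [show ζ.im = -K by linarith, abs_neg] at this
    linarith [le_abs_self K, Real.pi_pos]
  · intro y hy
    have hline (x : ℝ) : (x : ℂ) + y * I - (a - K * I) = x - (a - (y + K : ℝ) * I) := by
      push_cast
      ring
    have hyK : Real.pi ≤ y + K := by linarith [neg_abs_le y]
    have hyK_pos : 0 < y + K := Real.pi_pos.trans_le hyK
    have him : ((a : ℂ) - (y + K : ℝ) * I).im = -(y + K) := by simp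
    simp_rw [← enorm_eq_nnnorm, hline]
    rw [lintegral_enorm_inv_ofReal_sub_sq (by rw [him]; linarith), him, abs_neg,
      abs_of_pos hyK_pos, ENNReal.ofReal_le_one]
    exact (div_le_one hyK_pos).mpr hyK

lemma inv_two_mul_le_norm_inv_sub_sub_inv_sub {K a a' x : ℝ} (hK : 0 < K) (hxa : |x - a| ≤ 1)
    (hxa' : 2 * (1 + K) ≤ |x - a'|) :
    (2 * (1 + K))⁻¹ ≤ ‖((x : ℂ) - (a - K * I))⁻¹ - ((x : ℂ) - (a' - K * I))⁻¹‖ := by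
  have hnear : (1 + K)⁻¹ ≤ ‖((x : ℂ) - (a - K * I))⁻¹‖ := by
    have hreim : |((x : ℂ) - (a - K * I)).re| + |((x : ℂ) - (a - K * I)).im| = |x - a| + K := by
      simp [abs_of_pos hK]
    refine le_trans ?_ (Complex.inv_abs_re_add_abs_im_le_norm_inv _)
    rw [hreim]
    exact inv_anti₀ (by positivity) (by linarith)
  have hfar : ‖((x : ℂ) - (a' - K * I))⁻¹‖ ≤ (2 * (1 + K))⁻¹ := by
    have hre : ((x : ℂ) - (a' - K * I)).re = x - a' := by simp
    refine (Complex.norm_inv_le_inv_abs_re ?_).trans ?_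
    · rw [hre]
      exact abs_pos.mp (lt_of_lt_of_le (by linarith) hxa')
    · rw [hre]
      exact inv_anti₀ (by linarith) hxa'
  have hhalf : (1 + K)⁻¹ = 2 * (2 * (1 + K))⁻¹ := by
    field_simp
  linarith [norm_sub_norm_le ((x : ℂ) - (a - K * I))⁻¹ ((x : ℂ) - (a' - K * I))⁻¹]

lemma sub_one_le_abs_sub_of_mem_Icc {X T x : ℝ} (hT : 0 ≤ T) {n m : ℕ} (hnm : n ≠ m)
    (hx : x ∈ Icc (X + n * T) (X + n * T + 1)) : T - 1 ≤ |x - (X + m * T)| := by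
  obtain ⟨hx₁, hx₂⟩ := hx
  rcases hnm.lt_or_gt with h | h
  · have h' : (n : ℝ) + 1 ≤ m := by exact_mod_cast h
    exact le_abs.mpr (Or.inr (by nlinarith))
  · have h' : (m : ℝ) + 1 ≤ n := by exact_mod_cast h
    exact le_abs.mpr (Or.inl (by nlinarith))

/-- Non-compactness of the weighted restriction operator `R_{w,0} : H²(𝕊) → L²(ℝ)`,
`f ↦ (w f)|ℝ`, when the bounded analytic weight `w` on the strip
`𝕊 = {|Im ζ| < b}` has a nonzero limit `c` at `+∞` along `ℝ`: the image of the unit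
ball of `H²(𝕊)` is not totally bounded in `L²(ℝ)`. -/
theorem weighted_restriction_not_compact
    {b : ℝ} (hb : 0 < b) (w : ℂ → ℂ) (c : ℂ) (hc : c ≠ 0)
    (hw : DifferentiableOn ℂ w {ζ : ℂ | |ζ.im| < b})
    (hwb : ∃ M : ℝ, ∀ ζ : ℂ, |ζ.im| < b → ‖w ζ‖ ≤ M)
    (hlim : Filter.Tendsto (fun θ : ℝ => w (θ : ℂ)) Filter.atTop (nhds c)) :
    ¬ TotallyBounded {g : Lp ℂ 2 (volume : Measure ℝ) |
        ∃ f : ℂ → ℂ, DifferentiableOn ℂ f {ζ : ℂ | |ζ.im| < b} ∧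
          (∀ y : ℝ, |y| < b →
            ∫⁻ x : ℝ, (‖f ((x : ℂ) + (y : ℂ) * Complex.I)‖₊ : ENNReal) ^ 2 ≤ 1) ∧
          ∀ᵐ x : ℝ, (g : ℝ → ℂ) x = w (x : ℂ) * f (x : ℂ)} := by
  obtain ⟨M, hM⟩ := hwb
  have hreal (x : ℝ) : (x : ℂ) ∈ {ζ : ℂ | |ζ.im| < b} := by simpa using hb
  have hw_top : MemLp (fun x : ℝ => w x) ⊤ volume :=
    memLp_top_of_bound (hw.continuousOn.comp_continuous continuous_ofReal hreal).aestronglyMeasurable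
      M (ae_of_all _ fun x => hM x (hreal x))
  obtain ⟨X, hX⟩ := Filter.eventually_atTop.mp
    (hlim.norm.eventually (eventually_ge_nhds (half_lt_self (norm_pos_iff.mpr hc))))
  set K := b + Real.pi
  have hK : 0 < K := by positivity
  set a : ℕ → ℝ := fun n => X + n * (2 * (1 + K) + 1)
  have hmem (n : ℕ) : MemLp (fun x : ℝ => w x * ((x : ℂ) - (a n - K * I))⁻¹) 2 volume :=
    (memLp_two_inv_ofReal_sub (by simpa using hK.ne')).mul' hw_top
  refine not_totallyBounded_of_pairwise_le_dist (u := fun n => (hmem n).toLp _)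
    (fun n => ⟨_, (inv_sub_mem_hardyStripUnitBall le_rfl (a n)).1,
      (inv_sub_mem_hardyStripUnitBall le_rfl (a n)).2, (hmem n).coeFn_toLp⟩)
    (δ := ‖c‖ / 2 * (2 * (1 + K))⁻¹) (by positivity) fun n m hnm => ?_
  refine le_dist_toLp_of_le_norm_sub ENNReal.ofNat_ne_top _ _ (s := Icc (a n) (a n + 1))
    measurableSet_Icc (by simp) (by positivity) fun x hx => ?_
  have hXx : X ≤ x := (le_add_of_nonneg_right (by positivity)).trans hx.1
  have hxa : |x - a n| ≤ 1 := abs_le.mpr ⟨by linarith [hx.1], by linarith [hx.2]⟩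
  have hxa' : 2 * (1 + K) ≤ |x - a m| := by
    linarith [sub_one_le_abs_sub_of_mem_Icc (by positivity : 0 ≤ 2 * (1 + K) + 1) hnm hx]
  rw [← mul_sub, norm_mul]
  exact mul_le_mul (hX x hXx) (inv_two_mul_le_norm_inv_sub_sub_inv_sub hK hxa hxa')
    (by positivity) (norm_nonneg _)
end

section
/- Let $0 < \lambda < 1$, $\varphi_\lambda$ the lens map, and $\gamma(t) = \varphi_\lambda(e^{it})$ (boundary values). Then there exist constants $0 < c < C$ (depending only on $\lambda$) such that for $0 < t \leq \pi/2$: $c\, t^\lambda \leq 1 - |\gamma(t)| \leq |1 - \gamma(t)| \leq C\, t^\lambda$. -/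
open Complex Real

/-- The lens map of parameter `0 < λ < 1` (principal powers). -/
noncomputable def lensMap (lam : ℝ) (z : ℂ) : ℂ :=
    ((1 + z) ^ (lam : ℂ) - (1 - z) ^ (lam : ℂ)) / ((1 + z) ^ (lam : ℂ) + (1 - z) ^ (lam : ℂ))

/-!
On the circle, `1 + e^{it} = 2 cos(t/2) e^{it/2}` and `1 - e^{it} = 2 sin(t/2) e^{i(t/2 - π/2)}`,
with both arguments in `(-π, π]`, so the principal powers give `φ_λ(e^{it}) = (1 - w) / (1 + w)`
for `w = tan(t/2)^λ e^{-iλπ/2}`. As `|1 + w|² - |1 - w|² = 4 Re w`, the Cayley transform of a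
point with `Re w ≥ 0` satisfies `1 - |γ| ≥ 2 Re w / |1 + w|²` and `|1 - γ| = 2|w| / |1 + w| ≤ 2|w|`.
Here `Re w = |w| cos(λπ/2)` and `t/2 ≤ tan(t/2) ≤ t`, so both quantities are comparable to `t^λ`.
-/

lemma ofReal_mul_exp_mul_I_cpow {x y : ℝ} (hx : 0 < x) (hy₁ : -π < y) (hy₂ : y ≤ π) (a : ℝ) :
    ((x : ℂ) * exp (y * I)) ^ (a : ℂ) = ((x ^ a : ℝ) : ℂ) * exp ((a * y : ℝ) * I) := by
  rw [cpow_def_of_ne_zero (mul_ne_zero (ofReal_ne_zero.2 hx.ne') (exp_ne_zero _)),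
    log_ofReal_mul hx (exp_ne_zero _), log_exp (by simpa using hy₁) (by simpa using hy₂),
    Real.rpow_def_of_pos hx, ofReal_exp, ← Complex.exp_add]
  push_cast
  ring_nf

lemma exp_half_mul_I_mul_self (t : ℝ) :
    exp ((t / 2 : ℂ) * I) * exp ((t / 2 : ℂ) * I) = exp (t * I) := by
  rw [← Complex.exp_add]; ring_nf

lemma exp_neg_half_mul_I_mul_exp (t : ℝ) : exp (-(t / 2 : ℂ) * I) * exp ((t / 2 : ℂ) * I) = 1 := by
  rw [← Complex.exp_add]; ring_nf; exact Complex.exp_zero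

lemma one_add_exp_mul_I (t : ℝ) :
    1 + exp (t * I) = ((2 * Real.cos (t / 2) : ℝ) : ℂ) * exp ((t / 2 : ℝ) * I) := by
  push_cast
  rw [two_cos]
  linear_combination -exp_half_mul_I_mul_self t - exp_neg_half_mul_I_mul_exp t

lemma one_sub_exp_mul_I (t : ℝ) :
    1 - exp (t * I) = ((2 * Real.sin (t / 2) : ℝ) : ℂ) * exp ((t / 2 - π / 2 : ℝ) * I) := by
  push_cast
  rw [show ((t : ℂ) / 2 - π / 2) * I = t / 2 * I + -π / 2 * I by ring, Complex.exp_add,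
    exp_neg_pi_div_two_mul_I, two_sin]
  linear_combination (exp_half_mul_I_mul_self t) - exp_neg_half_mul_I_mul_exp t
    + (exp (-(t / 2 : ℂ) * I) - exp ((t / 2 : ℂ) * I)) * exp ((t / 2 : ℂ) * I) * I_sq

lemma lensMap_eq_cayley {lam : ℝ} {z : ℂ} (hz : (1 + z) ^ (lam : ℂ) ≠ 0) :
    lensMap lam z = (1 - (1 - z) ^ (lam : ℂ) / (1 + z) ^ (lam : ℂ)) /
      (1 + (1 - z) ^ (lam : ℂ) / (1 + z) ^ (lam : ℂ)) := by
  rw [lensMap, one_sub_div hz, one_add_div hz, div_div_div_cancel_right₀ hz]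

lemma lensMap_exp_mul_I (lam : ℝ) {t : ℝ} (ht₀ : 0 < t) (ht : t < π) :
    lensMap lam (exp (t * I)) =
      (1 - ((Real.tan (t / 2) ^ lam : ℝ) : ℂ) * exp ((-(lam * (π / 2)) : ℝ) * I)) /
        (1 + ((Real.tan (t / 2) ^ lam : ℝ) : ℂ) * exp ((-(lam * (π / 2)) : ℝ) * I)) := by
  have hcos : 0 < 2 * Real.cos (t / 2) :=
    mul_pos two_pos (Real.cos_pos_of_mem_Ioo ⟨by linarith, by linarith⟩)
  have hsin : 0 < 2 * Real.sin (t / 2) :=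
    mul_pos two_pos (Real.sin_pos_of_pos_of_lt_pi (by linarith) (by linarith))
  have hplus : (1 + exp (t * I)) ^ (lam : ℂ) =
      (((2 * Real.cos (t / 2)) ^ lam : ℝ) : ℂ) * exp ((lam * (t / 2) : ℝ) * I) := by
    rw [one_add_exp_mul_I, ofReal_mul_exp_mul_I_cpow hcos (by linarith) (by linarith)]
  have hminus : (1 - exp (t * I)) ^ (lam : ℂ) =
      (((2 * Real.sin (t / 2)) ^ lam : ℝ) : ℂ) * exp ((lam * (t / 2 - π / 2) : ℝ) * I) := by
    rw [one_sub_exp_mul_I, ofReal_mul_exp_mul_I_cpow hsin (by linarith) (by linarith)]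
  have hratio : (1 - exp (t * I)) ^ (lam : ℂ) / (1 + exp (t * I)) ^ (lam : ℂ) =
      ((Real.tan (t / 2) ^ lam : ℝ) : ℂ) * exp ((-(lam * (π / 2)) : ℝ) * I) := by
    rw [hplus, hminus, mul_div_mul_comm, ← ofReal_div, ← Real.div_rpow hsin.le hcos.le,
      mul_div_mul_left _ _ two_ne_zero, ← Real.tan_eq_sin_div_cos, ← Complex.exp_sub]
    congr 3
    push_cast
    ring
  have hne : (1 + exp (t * I)) ^ (lam : ℂ) ≠ 0 := by
    rw [hplus]
    exact mul_ne_zero (ofReal_ne_zero.2 (Real.rpow_pos_of_pos hcos lam).ne') (exp_ne_zero _)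
  rw [lensMap_eq_cayley hne, hratio]

lemma norm_one_add_sq_sub_norm_one_sub_sq (w : ℂ) : ‖1 + w‖ ^ 2 - ‖1 - w‖ ^ 2 = 4 * w.re := by
  simp only [Complex.sq_norm, normSq_apply, add_re, add_im, sub_re, sub_im, one_re, one_im]
  ring

lemma one_le_norm_one_add {w : ℂ} (hw : 0 ≤ w.re) : 1 ≤ ‖1 + w‖ :=
  le_trans (by simpa using hw) (re_le_norm (1 + w))

lemma norm_one_sub_cayley_le {w : ℂ} (hw : 0 ≤ w.re) :
    ‖1 - (1 - w) / (1 + w)‖ ≤ 2 * ‖w‖ := by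
  have h1 := one_le_norm_one_add hw
  have hne : 1 + w ≠ 0 := norm_pos_iff.1 (by linarith)
  rw [show 1 - (1 - w) / (1 + w) = 2 * w / (1 + w) by field_simp; ring, norm_div, norm_mul,
    Complex.norm_two]
  exact div_le_self (by positivity) h1

lemma two_mul_re_div_le_one_sub_norm_cayley {w : ℂ} (hw : 0 ≤ w.re) :
    2 * w.re / ‖1 + w‖ ^ 2 ≤ 1 - ‖(1 - w) / (1 + w)‖ := by
  have hpos : 0 < ‖1 + w‖ := by linarith [one_le_norm_one_add hw]
  have hq : 1 - ‖(1 - w) / (1 + w)‖ ^ 2 = 4 * w.re / ‖1 + w‖ ^ 2 := by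
    rw [norm_div, div_pow, ← norm_one_add_sq_sub_norm_one_sub_sq]
    field_simp
  set q := ‖(1 - w) / (1 + w)‖
  calc 2 * w.re / ‖1 + w‖ ^ 2 = (1 - q ^ 2) / 2 := by rw [hq]; ring
    _ ≤ 1 - q := by nlinarith [sq_nonneg (1 - q)]

lemma Real.tan_le_one_of_nonneg_of_le_pi_div_four {x : ℝ} (h₀ : 0 ≤ x) (h : x ≤ π / 4) :
    Real.tan x ≤ 1 := by
  have hπ := Real.pi_pos
  rw [← Real.tan_pi_div_four]
  exact Real.strictMonoOn_tan.monotoneOn ⟨by linarith, by linarith⟩ ⟨by linarith, by linarith⟩ h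

lemma Real.tan_le_two_mul {x : ℝ} (h₀ : 0 ≤ x) (h : x ≤ π / 3) : Real.tan x ≤ 2 * x := by
  have hcos : 1 / 2 ≤ Real.cos x := by
    rw [← Real.cos_pi_div_three]
    exact Real.cos_le_cos_of_nonneg_of_le_pi h₀ (by linarith [Real.pi_pos]) h
  rw [Real.tan_eq_sin_div_cos, div_le_iff₀ (by linarith)]
  nlinarith [Real.sin_le h₀]

lemma ofReal_mul_exp_mul_I_cayley_bounds {r θ : ℝ} (hr₀ : 0 ≤ r) (hr₁ : r ≤ 1)
    (hθ : 0 ≤ Real.cos θ) :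
    r * Real.cos θ / 2 ≤ 1 - ‖(1 - r * exp (θ * I)) / (1 + r * exp (θ * I))‖ ∧
      ‖1 - (1 - r * exp (θ * I)) / (1 + r * exp (θ * I))‖ ≤ 2 * r := by
  set w : ℂ := r * exp (θ * I)
  have hw_re : w.re = r * Real.cos θ := by rw [re_ofReal_mul, exp_ofReal_mul_I_re]
  have hw_norm : ‖w‖ = r := by
    rw [norm_mul, norm_real, Real.norm_of_nonneg hr₀, norm_exp_ofReal_mul_I, mul_one]
  have hw : 0 ≤ w.re := by rw [hw_re]; positivity
  have h1w : ‖1 + w‖ ≤ 2 := by linarith [norm_add_le 1 w, norm_one (α := ℂ)]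
  refine ⟨?_, hw_norm ▸ norm_one_sub_cayley_le hw⟩
  calc r * Real.cos θ / 2 = 2 * w.re / 2 ^ 2 := by rw [hw_re]; ring
    _ ≤ 2 * w.re / ‖1 + w‖ ^ 2 := by
        gcongr
        exact pow_pos (by linarith [one_le_norm_one_add hw]) 2
    _ ≤ _ := two_mul_re_div_le_one_sub_norm_cayley hw

lemma rpow_tan_half_bounds {lam t : ℝ} (hlam : 0 ≤ lam) (ht₀ : 0 < t) (ht : t ≤ π / 2) :
    (t / 2) ^ lam ≤ Real.tan (t / 2) ^ lam ∧ Real.tan (t / 2) ^ lam ≤ t ^ lam ∧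
      Real.tan (t / 2) ^ lam ≤ 1 := by
  have hπ := Real.pi_pos
  have htan : 0 ≤ Real.tan (t / 2) :=
    Real.tan_nonneg_of_nonneg_of_le_pi_div_two (by linarith) (by linarith)
  refine ⟨Real.rpow_le_rpow (by linarith) (Real.le_tan (by linarith) (by linarith)) hlam,
    Real.rpow_le_rpow htan ?_ hlam, Real.rpow_le_one htan
      (Real.tan_le_one_of_nonneg_of_le_pi_div_four (by linarith) (by linarith)) hlam⟩
  linarith [Real.tan_le_two_mul (x := t / 2) (by linarith) (by linarith)]

/-- Boundary estimate for the lens map: with `γ(t) = φ_λ(e^{it})`, for `0 < t ≤ π/2`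
one has `c t^λ ≤ 1 - |γ(t)| ≤ |1 - γ(t)| ≤ C t^λ`. -/
theorem lensMap_boundary_estimate {lam : ℝ} (hlam0 : 0 < lam) (hlam1 : lam < 1) :
    ∃ c C : ℝ, 0 < c ∧ c < C ∧
      ∀ t : ℝ, 0 < t → t ≤ π / 2 →
        c * t ^ lam ≤ 1 - ‖lensMap lam (Complex.exp (t * Complex.I))‖ ∧
        1 - ‖lensMap lam (Complex.exp (t * Complex.I))‖ ≤
          ‖1 - lensMap lam (Complex.exp (t * Complex.I))‖ ∧
        ‖1 - lensMap lam (Complex.exp (t * Complex.I))‖ ≤ C * t ^ lam := by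
  have hπ := Real.pi_pos
  set θ := lam * (π / 2)
  have hθ : 0 < Real.cos θ := Real.cos_pos_of_mem_Ioo
    ⟨by linarith [show 0 < θ from mul_pos hlam0 (by positivity)],
      mul_lt_of_lt_one_left (by positivity) hlam1⟩
  have h2lam : 1 ≤ (2 : ℝ) ^ lam := Real.one_le_rpow one_le_two hlam0.le
  refine ⟨Real.cos θ / (2 * 2 ^ lam), 2, by positivity, ?_, fun t ht₀ ht => ?_⟩
  · rw [div_lt_iff₀ (by positivity)]
    nlinarith [Real.cos_le_one θ]
  obtain ⟨hr_low, hr_up, hr_one⟩ := rpow_tan_half_bounds hlam0.le ht₀ ht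
  obtain ⟨hγ_low, hγ_up⟩ := ofReal_mul_exp_mul_I_cayley_bounds (θ := -θ)
    ((Real.rpow_nonneg (by linarith) lam).trans hr_low)
    hr_one (by rw [Real.cos_neg]; exact hθ.le)
  rw [Real.cos_neg] at hγ_low
  rw [← lensMap_exp_mul_I lam ht₀ (by linarith)] at hγ_low hγ_up
  refine ⟨?_, by simpa using norm_sub_norm_le 1 (lensMap lam (exp (t * I))),
    hγ_up.trans (by gcongr)⟩
  calc Real.cos θ / (2 * 2 ^ lam) * t ^ lam = (t / 2) ^ lam * Real.cos θ / 2 := by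
        rw [Real.div_rpow ht₀.le zero_le_two]; field_simp
    _ ≤ Real.tan (t / 2) ^ lam * Real.cos θ / 2 := by gcongr
    _ ≤ _ := hγ_low
end

section
/- Let $T = M_w C_\varphi$ be a bounded weighted composition operator on $H^2(\mathbb{D})$ with $w \in H^\infty$ not identically zero and $\varphi$ a non-constant analytic self-map of $\mathbb{D}$. Let $u_1, \dots, u_n \in \mathbb{D}$ be points such that the images $v_j = \varphi(u_j)$ are pairwise distinct, and let $I_v$ denote the interpolation constant of the finite sequence $(v_j)$ in $H^\infty$. Then the $n$-th approximation number satisfies $a_n(T) \geq \big(\min_{1 \leq j \leq n}|w(u_j)|\big)\big(\min_{1\leq j \leq n}\sqrt{1 - |u_j|^2}\big)\, I_v^{-2}$, up to a universal positive constant. -/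
/-!
For `g` in the span of the kernels `K_{v_j}` (`v_j = φ(u_j)`), let `h ∈ H^∞` interpolate the values
`g(v_j) = ⟪K_{v_j}, g⟫` with `‖h‖_∞ ≤ I_v max_j |g(v_j)|`. Then `h - g` is orthogonal to the span,
and `‖h‖_{H²} ≤ ‖h‖_∞` (Parseval on the circles `|z| = r < 1`), so `‖g‖ ≤ I_v max_j |g(v_j)|`.
Conversely `(T g)(u_j) = ⟪T^* K_{u_j}, g⟫ = w(u_j) g(v_j)` and `‖K_{u_j}‖ = (1 - |u_j|²)^{-1/2}`,
so `‖T g‖ ≥ |w(u_j)| √(1 - |u_j|²) |g(v_j)|` for every `j`. Hence `‖T g‖ ≥ m ‖g‖ / I_v` on the span,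
where `m = min_j |w(u_j)| · min_j √(1 - |u_j|²)`. Interpolation also makes the `K_{v_j}` linearly
independent, so an operator of smaller rank kills a nonzero vector of their span, and
`a_n(T) ≥ m / I_v ≥ m / I_v²` as `I_v ≥ 1`.
-/

open Module Metric

/-- The Hardy space `H²(𝔻)`, modelled as `ℓ²` via Taylor coefficients. -/
noncomputable abbrev HardyH2 := lp (fun _ : ℕ => ℂ) 2

/-- The reproducing kernel `K_a(z) = (1 - ā z)⁻¹` of `H²(𝔻)`, i.e. the coefficient
sequence `(ā ⁿ)ₙ ∈ ℓ²`. -/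
noncomputable def hardyKernel (a : ℂ) (ha : ‖a‖ < 1) : HardyH2 :=
  ⟨fun n => (starRingEnd ℂ a) ^ n, by
    apply memℓp_gen
    have h : Summable fun n : ℕ => (‖a‖ ^ 2) ^ n :=
      summable_geometric_of_lt_one (by positivity) (by nlinarith [norm_nonneg a])
    refine h.congr fun n => ?_
    have : ((2 : ENNReal)).toReal = ((2 : ℕ) : ℝ) := by norm_num
    rw [this, Real.rpow_natCast]
    simp [norm_pow, ← pow_mul, mul_comm]⟩

/-- The `n`-th approximation number of a bounded operator on `H²`. -/
noncomputable def approxNum (T : HardyH2 →L[ℂ] HardyH2) (n : ℕ) : ℝ :=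
    sInf {c : ℝ | ∃ R : HardyH2 →L[ℂ] HardyH2,
      LinearMap.rank (R : HardyH2 →ₗ[ℂ] HardyH2) < (n : Cardinal) ∧ c = ‖T - R‖}

open Real Complex MeasureTheory Set Submodule

theorem fourierCoeffOn_comp_circleMap (f : ℂ → ℂ) {r : ℝ} (hr : r ≠ 0) (n : ℕ) :
    fourierCoeffOn two_pi_pos (fun θ => f (circleMap 0 r θ)) n =
      (r : ℂ) ^ n * (cauchyPowerSeries f 0 r).coeff n := by
  have hr' : (r : ℂ) ≠ 0 := ofReal_ne_zero.2 hr
  have hexp (θ : ℝ) :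
      2 * π * I * ((-n : ℤ) : ℂ) * θ / ((2 * π : ℝ) : ℂ) = -(n * (θ * I)) := by
    push_cast
    field_simp
  have hcauchy (θ : ℝ) : circleMap 0 r θ * I *
      ((circleMap 0 r θ)⁻¹ ^ n * ((circleMap 0 r θ)⁻¹ * f (circleMap 0 r θ))) =
      I * ((r : ℂ) ^ n)⁻¹ * (exp (-(n * (θ * I))) * f (circleMap 0 r θ)) := by
    have he : exp (θ * I) ≠ 0 := Complex.exp_ne_zero _
    simp only [circleMap, zero_add, Complex.exp_neg, Complex.exp_nat_mul, mul_inv, mul_pow, inv_pow]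
    field_simp
  rw [fourierCoeffOn_eq_integral, FormalMultilinearSeries.coeff, cauchyPowerSeries,
    ContinuousMultilinearMap.mkPiRing_apply, circleIntegral]
  simp only [sub_zero, smul_eq_mul, deriv_circleMap, fourier_coe_apply, hexp, hcauchy,
    intervalIntegral.integral_const_mul, Pi.one_apply, Finset.prod_const_one, Complex.real_smul]
  generalize ∫ θ in (0 : ℝ)..2 * π, exp (-(n * (θ * I))) * f (circleMap 0 r θ) = J
  push_cast
  field_simp

theorem sum_norm_sq_cauchyPowerSeries_coeff_le {f : ℂ → ℂ} {r M : ℝ} (hr : 0 < r)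
    (hf : ContinuousOn f (sphere 0 r)) (hM : ∀ z ∈ sphere (0 : ℂ) r, ‖f z‖ ≤ M) (s : Finset ℕ) :
    ∑ n ∈ s, ‖(r : ℂ) ^ n * (cauchyPowerSeries f 0 r).coeff n‖ ^ 2 ≤ M ^ 2 := by
  have hcirc (θ : ℝ) : circleMap 0 r θ ∈ sphere (0 : ℂ) r := circleMap_mem_sphere 0 hr.le θ
  have hcont : Continuous fun θ => f (circleMap 0 r θ) :=
    hf.comp_continuous (continuous_circleMap 0 r) hcirc
  have hL2 : MemLp (fun θ => f (circleMap 0 r θ)) 2 (volume.restrict (Ioc 0 (2 * π))) :=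
    MemLp.of_bound hcont.aestronglyMeasurable M (ae_of_all _ fun θ => hM _ (hcirc θ))
  have hparseval := hasSum_sq_fourierCoeffOn two_pi_pos hL2
  calc ∑ n ∈ s, ‖(r : ℂ) ^ n * (cauchyPowerSeries f 0 r).coeff n‖ ^ 2
      = ∑ i ∈ s.map Nat.castEmbedding,
          ‖fourierCoeffOn two_pi_pos (fun θ => f (circleMap 0 r θ)) i‖ ^ 2 := by
        simp [Finset.sum_map, fourierCoeffOn_comp_circleMap f hr.ne']
    _ ≤ (2 * π - 0)⁻¹ • ∫ θ in (0 : ℝ)..2 * π, ‖f (circleMap 0 r θ)‖ ^ 2 :=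
        sum_le_hasSum _ (fun _ _ => sq_nonneg _) hparseval
    _ ≤ (2 * π - 0)⁻¹ • ∫ _ in (0 : ℝ)..2 * π, M ^ 2 := by
        gcongr
        · simp [pi_pos.le]
        · exact intervalIntegral.integral_mono_on two_pi_pos.le
            ((hcont.norm.pow 2).intervalIntegrable _ _) intervalIntegrable_const
            fun θ _ => pow_le_pow_left₀ (norm_nonneg _) (hM _ (hcirc θ)) 2
    _ = M ^ 2 := by
        simp only [sub_zero, intervalIntegral.integral_const, smul_eq_mul]
        field_simp

theorem inner_hardyKernel (a : ℂ) (ha : ‖a‖ < 1) (x : HardyH2) :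
    inner ℂ (hardyKernel a ha) x = ∑' n, a ^ n * x n := by
  rw [lp.inner_eq_tsum]
  refine tsum_congr fun n => ?_
  rw [RCLike.inner_apply]
  show x n * (starRingEnd ℂ) ((starRingEnd ℂ a) ^ n) = a ^ n * x n
  rw [map_pow, Complex.conj_conj, mul_comm]

theorem norm_hardyKernel_sq (a : ℂ) (ha : ‖a‖ < 1) :
    ‖hardyKernel a ha‖ ^ 2 = (1 - ‖a‖ ^ 2)⁻¹ := by
  have hnorm : ‖((‖a‖ ^ 2 : ℝ) : ℂ)‖ < 1 := by
    rw [Complex.norm_real, Real.norm_eq_abs, abs_of_nonneg (by positivity)]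
    nlinarith [norm_nonneg a]
  have h := inner_hardyKernel a ha (hardyKernel a ha)
  rw [inner_self_eq_norm_sq_to_K] at h
  have hterm (n : ℕ) : a ^ n * hardyKernel a ha n = ((‖a‖ ^ 2 : ℝ) : ℂ) ^ n := by
    show a ^ n * (starRingEnd ℂ a) ^ n = _
    rw [← mul_pow, Complex.mul_conj, Complex.normSq_eq_norm_sq]
  rw [tsum_congr hterm, tsum_geometric_of_norm_lt_one hnorm] at h
  exact Complex.ofReal_injective (by push_cast at h ⊢; exact h)

theorem norm_hardyKernel_mul_sqrt (a : ℂ) (ha : ‖a‖ < 1) :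
    ‖hardyKernel a ha‖ * Real.sqrt (1 - ‖a‖ ^ 2) = 1 := by
  have hpos : 0 < 1 - ‖a‖ ^ 2 := by nlinarith [norm_nonneg a]
  rw [← Real.sqrt_sq (norm_nonneg _), norm_hardyKernel_sq, Real.sqrt_inv]
  exact inv_mul_cancel₀ (Real.sqrt_pos.2 hpos).ne'

theorem cauchyPowerSeries_eq_of_differentiableOn_ball {h : ℂ → ℂ}
    (hd : DifferentiableOn ℂ h (ball 0 1)) {r s : NNReal} (hr0 : 0 < r) (hr1 : (r : ℝ) < 1)
    (hs0 : 0 < s) (hs1 : (s : ℝ) < 1) : cauchyPowerSeries h 0 r = cauchyPowerSeries h 0 s :=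
  ((hd.mono (closedBall_subset_ball hr1)).hasFPowerSeriesOnBall hr0).hasFPowerSeriesAt
    |>.eq_formalMultilinearSeries
      ((hd.mono (closedBall_subset_ball hs1)).hasFPowerSeriesOnBall hs0).hasFPowerSeriesAt

theorem exists_hardyH2_inner_hardyKernel_eq {h : ℂ → ℂ} {M : ℝ}
    (hd : DifferentiableOn ℂ h (ball 0 1)) (hM : ∀ z ∈ ball (0 : ℂ) 1, ‖h z‖ ≤ M) :
    ∃ x : HardyH2, ‖x‖ ≤ M ∧ ∀ a (ha : ‖a‖ < 1), inner ℂ (hardyKernel a ha) x = h a := by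
  set p := cauchyPowerSeries h 0 (1 / 2 : NNReal)
  have hp {r : NNReal} (hr0 : 0 < r) (hr1 : (r : ℝ) < 1) : cauchyPowerSeries h 0 r = p :=
    cauchyPowerSeries_eq_of_differentiableOn_ball hd hr0 hr1 (by norm_num) (by norm_num)
  have hbessel (s : Finset ℕ) : ∑ n ∈ s, ‖p.coeff n‖ ^ 2 ≤ M ^ 2 := by
    have hq : Continuous fun r : ℝ => ∑ n ∈ s, ‖(r : ℂ) ^ n * p.coeff n‖ ^ 2 := by fun_prop
    have hlim := (hq.tendsto 1).mono_left (nhdsWithin_le_nhds (s := Iio 1))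
    simp only [ofReal_one, one_pow, one_mul] at hlim
    refine le_of_tendsto hlim ?_
    filter_upwards [Ioo_mem_nhdsLT (zero_lt_one' ℝ)] with r ⟨hr0, hr1⟩
    lift r to NNReal using hr0.le
    have hsphere : sphere (0 : ℂ) r ⊆ ball 0 1 :=
      sphere_subset_closedBall.trans (closedBall_subset_ball hr1)
    rw [← hp hr0 hr1]
    exact sum_norm_sq_cauchyPowerSeries_coeff_le hr0 (hd.continuousOn.mono hsphere)
      (fun z hz => hM z (hsphere hz)) s
  have hM0 : 0 ≤ M := (norm_nonneg _).trans (hM 0 (mem_ball_self one_pos))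
  have htoReal : (2 : ENNReal).toReal = 2 := by norm_num
  have hmem : Memℓp p.coeff 2 := memℓp_gen' (C := M ^ 2) fun s => by
    simpa [htoReal] using hbessel s
  refine ⟨⟨p.coeff, hmem⟩, lp.norm_le_of_forall_sum_le (by norm_num) hM0 fun s => ?_,
    fun a ha => ?_⟩
  · simpa [htoReal] using hbessel s
  obtain ⟨r, har, hr1⟩ := exists_between ha
  lift r to NNReal using (norm_nonneg a).trans har.le
  have hr0 : 0 < r := (norm_nonneg a).trans_lt har
  have ha_mem : a ∈ eball (0 : ℂ) r := by
    rw [mem_eball_zero_iff]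
    exact_mod_cast har
  have hsum := ((hd.mono (closedBall_subset_ball hr1)).hasFPowerSeriesOnBall hr0).hasSum ha_mem
  rw [hp hr0 hr1] at hsum
  simp only [FormalMultilinearSeries.apply_eq_pow_smul_coeff, smul_eq_mul, zero_add] at hsum
  exact (inner_hardyKernel a ha _).trans hsum.tsum_eq

section InterpolatingFamily

variable {𝕜 E ι : Type*} [RCLike 𝕜] [NormedAddCommGroup E] [InnerProductSpace 𝕜 E] {e : ι → E}

theorem linearIndependent_of_forall_exists_inner_eq [Finite ι]
    (he : ∀ c : ι → 𝕜, ∃ x : E, ∀ j, inner 𝕜 (e j) x = c j) : LinearIndependent 𝕜 e := by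
  classical
  choose x hx using fun i => he (Pi.single i 1)
  let f : E →ₗ[𝕜] ι → 𝕜 := LinearMap.pi fun i => (innerₛₗ 𝕜 (x i))
  refine LinearIndependent.of_comp f ?_
  have hf : f ∘ e = Pi.basisFun 𝕜 ι := by
    ext j i
    simp [f, ← inner_conj_symm (x i), hx, Pi.single_apply, eq_comm]
  rw [hf]
  exact (Pi.basisFun 𝕜 ι).linearIndependent

theorem norm_le_mul_iSup_norm_inner_of_mem_span {I : ℝ}
    (he : ∀ c : ι → 𝕜, ∃ x : E, ‖x‖ ≤ I * ⨆ j, ‖c j‖ ∧ ∀ j, inner 𝕜 (e j) x = c j)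
    {g : E} (hg : g ∈ span 𝕜 (range e)) : ‖g‖ ≤ I * ⨆ j, ‖inner 𝕜 (e j) g‖ := by
  obtain ⟨x, hxI, hx⟩ := he fun j => inner 𝕜 (e j) g
  have hgx : g ∈ (𝕜 ∙ (x - g))ᗮ := span_le.2 (range_subset_iff.2 fun j =>
    mem_orthogonal_singleton_iff_inner_left.2 (by rw [inner_sub_right, hx j, sub_self])) hg
  have hinner : inner 𝕜 g x = inner 𝕜 g g := by
    rw [← sub_eq_zero, ← inner_sub_right]
    exact mem_orthogonal_singleton_iff_inner_left.1 hgx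
  have hsq : ‖g‖ ^ 2 ≤ ‖g‖ * ‖x‖ := by
    rw [← inner_self_eq_norm_sq (𝕜 := 𝕜), ← hinner]
    exact (RCLike.re_le_norm _).trans (norm_inner_le_norm g x)
  nlinarith [norm_nonneg g, norm_nonneg x]

end InterpolatingFamily

theorem exists_ne_zero_mem_span_map_eq_zero {𝕜 E F : Type*} [Field 𝕜] [AddCommGroup E]
    [Module 𝕜 E] [AddCommGroup F] [Module 𝕜 F] {n : ℕ} {e : Fin n → E}
    (he : LinearIndependent 𝕜 e) {R : E →ₗ[𝕜] F} (hR : LinearMap.rank R < n) :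
    ∃ g ∈ span 𝕜 (range e), g ≠ 0 ∧ R g = 0 := by
  let Φ := Fintype.linearCombination 𝕜 e
  have hΦ : Function.Injective Φ := linearIndependent_iff_injective_fintypeLinearCombination.1 he
  obtain ⟨c, hc0, hRc⟩ : ∃ c, c ≠ 0 ∧ R (Φ c) = 0 := by
    by_contra! hinj
    have hRΦ : Function.Injective (R ∘ₗ Φ) :=
      (injective_iff_map_eq_zero _).2 fun c hc => by_contra fun h => hinj c h hc
    have hrank : LinearMap.rank (R ∘ₗ Φ) = n := by
      have := lift_rank_range_of_injective _ hRΦ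
      rwa [rank_fin_fun, Cardinal.lift_natCast, Cardinal.lift_eq_nat_iff] at this
    exact (hrank ▸ LinearMap.rank_comp_le_left Φ R).not_gt hR
  refine ⟨Φ c, ?_, fun h => hc0 (hΦ (h.trans (map_zero Φ).symm)), hRc⟩
  rw [← Fintype.range_linearCombination]
  exact LinearMap.mem_range_self Φ c

theorem le_opNorm_sub_of_linearIndependent {𝕜 E F : Type*} [NontriviallyNormedField 𝕜]
    [NormedAddCommGroup E] [NormedSpace 𝕜 E] [NormedAddCommGroup F] [NormedSpace 𝕜 F]
    {T R : E →L[𝕜] F} {n : ℕ} {e : Fin n → E} (he : LinearIndependent 𝕜 e)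
    (hR : LinearMap.rank (R : E →ₗ[𝕜] F) < n) {δ : ℝ}
    (hT : ∀ g ∈ span 𝕜 (range e), δ * ‖g‖ ≤ ‖T g‖) : δ ≤ ‖T - R‖ := by
  obtain ⟨g, hg, hg0, hRg⟩ := exists_ne_zero_mem_span_map_eq_zero he hR
  refine le_of_mul_le_mul_right ?_ (norm_pos_iff.2 hg0)
  calc δ * ‖g‖ ≤ ‖T g‖ := hT g hg
    _ = ‖(T - R) g‖ := by simp [show R g = 0 from hRg]
    _ ≤ ‖T - R‖ * ‖g‖ := (T - R).le_opNorm g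

theorem le_approxNum_of_linearIndependent {T : HardyH2 →L[ℂ] HardyH2} {n : ℕ} (hn : 0 < n)
    {e : Fin n → HardyH2} (he : LinearIndependent ℂ e) {δ : ℝ}
    (hT : ∀ g ∈ span ℂ (range e), δ * ‖g‖ ≤ ‖T g‖) : δ ≤ approxNum T n := by
  refine le_csInf ⟨‖T - 0‖, 0, ?_, rfl⟩ ?_
  · simpa using hn
  · rintro _ ⟨R, hR, rfl⟩
    exact le_opNorm_sub_of_linearIndependent he hR hT

theorem norm_mul_sqrt_mul_norm_inner_le {T : HardyH2 →L[ℂ] HardyH2} {a b c : ℂ}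
    (ha : ‖a‖ < 1) (hb : ‖b‖ < 1)
    (hadj : ContinuousLinearMap.adjoint T (hardyKernel a ha) = starRingEnd ℂ c • hardyKernel b hb)
    (g : HardyH2) :
    ‖c‖ * Real.sqrt (1 - ‖a‖ ^ 2) * ‖inner ℂ (hardyKernel b hb) g‖ ≤ ‖T g‖ := by
  have hinner : inner ℂ (hardyKernel a ha) (T g) = c * inner ℂ (hardyKernel b hb) g := by
    rw [← ContinuousLinearMap.adjoint_inner_left, hadj, inner_smul_left, Complex.conj_conj]
  calc ‖c‖ * Real.sqrt (1 - ‖a‖ ^ 2) * ‖inner ℂ (hardyKernel b hb) g‖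
      = Real.sqrt (1 - ‖a‖ ^ 2) * ‖inner ℂ (hardyKernel a ha) (T g)‖ := by
        rw [hinner, norm_mul]; ring
    _ ≤ Real.sqrt (1 - ‖a‖ ^ 2) * (‖hardyKernel a ha‖ * ‖T g‖) := by
        gcongr; exact norm_inner_le_norm _ _
    _ = ‖T g‖ := by
        rw [← mul_assoc, mul_comm (Real.sqrt _), norm_hardyKernel_mul_sqrt, one_mul]

theorem iInf_mul_iInf_mul_iSup_norm_inner_le {T : HardyH2 →L[ℂ] HardyH2} {w φ : ℂ → ℂ}
    (hφ : ∀ a : ℂ, ‖a‖ < 1 → ‖φ a‖ < 1)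
    (hadj : ∀ (a : ℂ) (ha : ‖a‖ < 1), ContinuousLinearMap.adjoint T (hardyKernel a ha) =
      starRingEnd ℂ (w a) • hardyKernel (φ a) (hφ a ha))
    {ι : Type*} [Finite ι] [Nonempty ι] {u : ι → ℂ} (hu : ∀ j, ‖u j‖ < 1) (g : HardyH2) :
    (⨅ j, ‖w (u j)‖) * (⨅ j, Real.sqrt (1 - ‖u j‖ ^ 2)) *
      ⨆ j, ‖inner ℂ (hardyKernel (φ (u j)) (hφ _ (hu j))) g‖ ≤ ‖T g‖ := by
  have hA : 0 ≤ ⨅ j, ‖w (u j)‖ := le_ciInf fun _ => norm_nonneg _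
  have hB : 0 ≤ ⨅ j, Real.sqrt (1 - ‖u j‖ ^ 2) := le_ciInf fun _ => Real.sqrt_nonneg _
  rw [Real.mul_iSup_of_nonneg (by positivity)]
  refine ciSup_le fun j => le_trans ?_ (norm_mul_sqrt_mul_norm_inner_le _ _ (hadj _ (hu j)) g)
  gcongr
  exacts [ciInf_le (Finite.bddBelow_range _) j, ciInf_le (Finite.bddBelow_range _) j]

/-- Lower bound for approximation numbers of a weighted composition operator
`T = M_w C_φ` on `H²(𝔻)` (characterized by the adjoint mapping equation
`T* K_a = conj (w a) • K_{φ(a)}`) in terms of the `H^∞`-interpolation constant `I_v`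
of the images `v_j = φ(u_j)` of `n+1` points `u_j ∈ 𝔻`:
`a_{n+1}(T) ≥ κ (min_j |w(u_j)|)(min_j √(1-|u_j|²)) I_v⁻²` with `κ` universal. -/
theorem approxNum_lower_bound_interpolation :
    ∃ κ : ℝ, 0 < κ ∧
      ∀ (T : HardyH2 →L[ℂ] HardyH2) (w φ : ℂ → ℂ)
        (hφ : ∀ a : ℂ, ‖a‖ < 1 → ‖φ a‖ < 1)
        (n : ℕ) (u : Fin (n + 1) → ℂ) (hu : ∀ j, ‖u j‖ < 1),
        Function.Injective (fun j => φ (u j)) →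
        (∀ (a : ℂ) (ha : ‖a‖ < 1),
          ContinuousLinearMap.adjoint T (hardyKernel a ha) =
            (starRingEnd ℂ (w a)) • hardyKernel (φ a) (hφ a ha)) →
        ∀ Iv : ℝ,
          (∀ c : Fin (n + 1) → ℂ, ∃ h : ℂ → ℂ,
            DifferentiableOn ℂ h (ball (0 : ℂ) 1) ∧
            (∀ z ∈ ball (0 : ℂ) 1, ‖h z‖ ≤ Iv * ⨆ j, ‖c j‖) ∧
            ∀ j, h (φ (u j)) = c j) →
          κ * (⨅ j, ‖w (u j)‖) * (⨅ j, Real.sqrt (1 - ‖u j‖ ^ 2)) / Iv ^ 2 ≤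
            approxNum T (n + 1) := by
  refine ⟨1, one_pos, ?_⟩
  intro T w φ hφ n u hu _ hadj Iv hinterp
  set K := fun j => hardyKernel (φ (u j)) (hφ _ (hu j))
  set A := ⨅ j, ‖w (u j)‖
  set B := ⨅ j, Real.sqrt (1 - ‖u j‖ ^ 2)
  have hA : 0 ≤ A := le_ciInf fun _ => norm_nonneg _
  have hB : 0 ≤ B := le_ciInf fun _ => Real.sqrt_nonneg _
  have hIv : 1 ≤ Iv := by
    obtain ⟨h, -, hbound, hval⟩ := hinterp 1
    simpa [hval 0] using hbound _ (mem_ball_zero_iff.2 (hφ _ (hu 0)))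
  have hKinterp (c : Fin (n + 1) → ℂ) :
      ∃ x : HardyH2, ‖x‖ ≤ Iv * ⨆ j, ‖c j‖ ∧ ∀ j, inner ℂ (K j) x = c j := by
    obtain ⟨h, hd, hbound, hval⟩ := hinterp c
    obtain ⟨x, hx, hxK⟩ := exists_hardyH2_inner_hardyKernel_eq hd hbound
    exact ⟨x, hx, fun j => (hxK _ _).trans (hval j)⟩
  have hbelow : ∀ g ∈ span ℂ (range K), A * B / Iv * ‖g‖ ≤ ‖T g‖ := fun g hg =>
    calc A * B / Iv * ‖g‖ ≤ A * B / Iv * (Iv * ⨆ j, ‖inner ℂ (K j) g‖) := by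
          gcongr; exact norm_le_mul_iSup_norm_inner_of_mem_span hKinterp hg
      _ = A * B * ⨆ j, ‖inner ℂ (K j) g‖ := by field_simp
      _ ≤ ‖T g‖ := iInf_mul_iInf_mul_iSup_norm_inner_le hφ hadj hu g
  calc 1 * A * B / Iv ^ 2 ≤ A * B / Iv := by
        rw [one_mul, pow_two, ← div_div]
        exact div_le_self (by positivity) hIv
    _ ≤ approxNum T (n + 1) :=
        le_approxNum_of_linearIndependent n.succ_pos
          (linearIndependent_of_forall_exists_inner_eq fun c => (hKinterp c).imp fun _ => And.right)
          hbelow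
end

section
/- Let $0 < \lambda < 1$ and let $m_\lambda(z) = \big(\frac{1 - \varphi_\lambda(z)^2}{1 - z^2}\big)^{1/2}$ where $\varphi_\lambda$ is the lens map. Then for all $z \in \mathbb{D}$, $|m_\lambda(z)| \leq 2\,|1 - z^2|^{(\lambda - 1)/2}$. -/
/-! With `A = (1 + z)^λ` and `B = (1 - z)^λ` one has `1 - φ_λ(z)² = 4AB / (A + B)²` and
`|AB| = |1 - z²|^λ`, so it suffices that `|A + B| ≥ 1`. Since
`Re((1 + z) * conj (1 - z)) = 1 - |z|² > 0`, the arguments of `1 + z` and `1 - z` differ by less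
than `π/2`; for `λ ≤ 1` so do those of `A` and `B`, hence `Re(A * conj B) ≥ 0` and
`|A + B| ≥ max |A| |B| ≥ 1`, because one of `|1 ± z|` is at least `1`. -/

open Complex Metric

namespace Complex

open ComplexConjugate Real

lemma re_cpow_mul_conj_cpow (x y : ℂ) (r : ℝ) :
    (x ^ (r : ℂ) * conj (y ^ (r : ℂ))).re =
      ‖x‖ ^ r * ‖y‖ ^ r * Real.cos (r * (arg x - arg y)) := by
  rw [mul_re, conj_re, conj_im, cpow_ofReal_re, cpow_ofReal_im, cpow_ofReal_re, cpow_ofReal_im,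
    mul_sub, Real.cos_sub]
  ring_nf

lemma abs_arg_sub_arg_lt_pi_div_two {x y : ℂ} (hx : 0 < x.re) (hy : 0 < y.re)
    (hxy : 0 < (x * conj y).re) : |arg x - arg y| < π / 2 := by
  have hcos : 0 < Real.cos |arg x - arg y| := by
    have h := re_cpow_mul_conj_cpow x y 1
    simp only [ofReal_one, cpow_one, Real.rpow_one, one_mul] at h
    rw [h] at hxy
    rw [Real.cos_abs]
    exact pos_of_mul_pos_right hxy (by positivity)
  have hx' := abs_lt.1 (abs_arg_lt_pi_div_two_iff.2 (Or.inl hx))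
  have hy' := abs_lt.1 (abs_arg_lt_pi_div_two_iff.2 (Or.inl hy))
  by_contra! h
  have hle : |arg x - arg y| ≤ π + π / 2 := by
    rw [abs_le]; constructor <;> linarith [Real.pi_pos]
  exact (Real.cos_nonpos_of_pi_div_two_le_of_le h hle).not_gt hcos

lemma re_cpow_mul_conj_cpow_nonneg {x y : ℂ} (hx : 0 < x.re) (hy : 0 < y.re)
    (hxy : 0 < (x * conj y).re) {r : ℝ} (hr0 : 0 ≤ r) (hr1 : r ≤ 1) :
    0 ≤ (x ^ (r : ℂ) * conj (y ^ (r : ℂ))).re := by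
  rw [re_cpow_mul_conj_cpow]
  refine mul_nonneg (by positivity) (Real.cos_nonneg_of_mem_Icc ?_)
  rw [Set.mem_Icc, ← abs_le, abs_mul, abs_of_nonneg hr0]
  calc r * |arg x - arg y| ≤ 1 * |arg x - arg y| := by gcongr
    _ ≤ π / 2 := by linarith [abs_arg_sub_arg_lt_pi_div_two hx hy hxy]

lemma max_norm_le_norm_add {a b : ℂ} (h : 0 ≤ (a * conj b).re) : max ‖a‖ ‖b‖ ≤ ‖a + b‖ := by
  have hsq : ‖a + b‖ ^ 2 = ‖a‖ ^ 2 + ‖b‖ ^ 2 + 2 * (a * conj b).re := by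
    simp only [Complex.sq_norm, normSq_add]
  refine max_le ?_ ?_ <;> exact le_of_pow_le_pow_left₀ two_ne_zero (norm_nonneg _)
    (by nlinarith [sq_nonneg ‖a‖, sq_nonneg ‖b‖])

lemma one_le_norm_one_add_or_one_sub (z : ℂ) : 1 ≤ ‖1 + z‖ ∨ 1 ≤ ‖1 - z‖ := by
  rcases le_total 0 z.re with h | h
  · exact Or.inl <| (by simpa using h : 1 ≤ (1 + z).re).trans (re_le_norm _)
  · exact Or.inr <| (by simpa using h : 1 ≤ (1 - z).re).trans (re_le_norm _)

lemma re_one_add_mul_conj_one_sub (z : ℂ) : ((1 + z) * conj (1 - z)).re = 1 - ‖z‖ ^ 2 := by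
  simp only [mul_re, conj_re, conj_im, add_re, add_im, sub_re, sub_im, one_re, one_im,
    Complex.sq_norm, normSq_apply]
  ring

variable {z : ℂ}

lemma re_one_add_pos (hz : ‖z‖ < 1) : 0 < (1 + z).re := by
  have := abs_lt.1 ((abs_re_le_norm z).trans_lt hz)
  simp only [add_re, one_re]
  linarith

lemma re_one_sub_pos (hz : ‖z‖ < 1) : 0 < (1 - z).re := by
  have := abs_lt.1 ((abs_re_le_norm z).trans_lt hz)
  simp only [sub_re, one_re]
  linarith

lemma one_sub_sq_ne_zero (hz : ‖z‖ < 1) : 1 - z ^ 2 ≠ 0 := by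
  have h : ‖z ^ 2‖ < 1 := by
    rw [norm_pow]
    exact pow_lt_one₀ (norm_nonneg _) hz two_ne_zero
  intro h0
  rw [← sub_eq_zero.1 h0, norm_one] at h
  exact h.false

lemma one_le_norm_one_add_cpow_add_one_sub_cpow (hz : ‖z‖ < 1) {r : ℝ} (hr0 : 0 ≤ r)
    (hr1 : r ≤ 1) : 1 ≤ ‖(1 + z) ^ (r : ℂ) + (1 - z) ^ (r : ℂ)‖ := by
  have hxy : 0 < ((1 + z) * conj (1 - z)).re := by
    rw [re_one_add_mul_conj_one_sub, sub_pos]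
    exact pow_lt_one₀ (norm_nonneg _) hz two_ne_zero
  refine le_trans ?_ (max_norm_le_norm_add <|
    re_cpow_mul_conj_cpow_nonneg (re_one_add_pos hz) (re_one_sub_pos hz) hxy hr0 hr1)
  rw [norm_cpow_real, norm_cpow_real]
  rcases one_le_norm_one_add_or_one_sub z with h | h
  · exact le_max_of_le_left (Real.one_le_rpow h hr0)
  · exact le_max_of_le_right (Real.one_le_rpow h hr0)

end Complex

lemma one_sub_lensMap_sq (lam : ℝ) (z : ℂ)
    (h : (1 + z) ^ (lam : ℂ) + (1 - z) ^ (lam : ℂ) ≠ 0) :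
    1 - lensMap lam z ^ 2 =
      4 * (1 + z) ^ (lam : ℂ) * (1 - z) ^ (lam : ℂ) /
        ((1 + z) ^ (lam : ℂ) + (1 - z) ^ (lam : ℂ)) ^ 2 := by
  rw [lensMap]
  field_simp
  ring

lemma norm_one_sub_lensMap_sq_le {lam : ℝ} (h0 : 0 ≤ lam) (h1 : lam ≤ 1) {z : ℂ}
    (hz : ‖z‖ < 1) :
    ‖1 - lensMap lam z ^ 2‖ ≤ 4 * ‖1 - z ^ 2‖ ^ lam := by
  have hS := one_le_norm_one_add_cpow_add_one_sub_cpow hz h0 h1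
  rw [one_sub_lensMap_sq lam z (norm_pos_iff.1 (by linarith)), norm_div, norm_mul, norm_mul,
    norm_pow, norm_cpow_real, norm_cpow_real, mul_assoc,
    ← Real.mul_rpow (norm_nonneg _) (norm_nonneg _),
    ← norm_mul, show (1 + z) * (1 - z) = 1 - z ^ 2 by ring, RCLike.norm_ofNat]
  exact div_le_self (by positivity) (one_le_pow₀ hS)

/-- For `m_λ(z) = ((1 - φ_λ(z)²)/(1 - z²))^{1/2}` one has
`|m_λ(z)| ≤ 2 |1 - z²|^{(λ-1)/2}` on `𝔻`. -/
theorem abs_mlam_le {lam : ℝ} (hlam0 : 0 < lam) (hlam1 : lam < 1) :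
    ∀ z ∈ ball (0 : ℂ) 1,
      ‖((1 - lensMap lam z ^ 2) / (1 - z ^ 2)) ^ ((1 : ℂ) / 2)‖ ≤
        2 * ‖(1 : ℂ) - z ^ 2‖ ^ ((lam - 1) / 2) := by
  intro z hz
  rw [mem_ball_zero_iff] at hz
  have hpos : 0 < ‖1 - z ^ 2‖ := norm_pos_iff.2 (one_sub_sq_ne_zero hz)
  have hq : ‖(1 - lensMap lam z ^ 2) / (1 - z ^ 2)‖ ≤ 4 * ‖1 - z ^ 2‖ ^ (lam - 1) := by
    rw [norm_div, Real.rpow_sub_one hpos.ne', mul_div_assoc']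
    exact div_le_div_of_nonneg_right (norm_one_sub_lensMap_sq_le hlam0.le hlam1.le hz) hpos.le
  calc ‖((1 - lensMap lam z ^ 2) / (1 - z ^ 2)) ^ ((1 : ℂ) / 2)‖
      = ‖(1 - lensMap lam z ^ 2) / (1 - z ^ 2)‖ ^ (1 / 2 : ℝ) := by
        rw [← norm_cpow_real]; norm_num
    _ ≤ (4 * ‖1 - z ^ 2‖ ^ (lam - 1)) ^ (1 / 2 : ℝ) := by gcongr
    _ = 2 * ‖(1 : ℂ) - z ^ 2‖ ^ ((lam - 1) / 2) := by
        rw [Real.mul_rpow (by norm_num) (by positivity), ← Real.rpow_mul hpos.le, mul_one_div]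
        norm_num
end
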